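/- Let u ∈ 𝒬 with Legendre transform f, let h > 0, and let q ∈ ∂Δ. Then the intersection of the segment [o, q] with W_h is connected, and the intersection of [o, q] with Δ̄ \ W_h is connected. -/

import Mathlib

/-!
Since the Legendre transform `f` is continuous, `W_h` consists of the subgradients of `f` at
points `p` with `f p ≤ h`. For `0 ≤ t < 1` the point `t • q` lies in the interior of `Δ̄`, where
`u` is locally bounded, so `x ↦ f x - ⟪t • q, x⟫` is coercive and has a minimiser `p_t`, i.e.
`t • q ∈ ∂f(p_t)`. Monotonicity of the subdifferential gives `⟪q, p_s - p_t⟫ ≤ 0` for `s < t`,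
hence `f p_s ≤ f p_t`. So the parameters `t ∈ [0, 1]` with `t • q ∈ W_h` form an initial
segment of `[0, 1]`, and both it and its complement are intervals.
-/

open MeasureTheory Set Filter Metric
open scoped RealInnerProductSpace ENNReal NNReal Topology

noncomputable section

/-- A rational piecewise-linear convex function on `ℝⁿ`: a (pointwise) maximum of finitely
many affine functions with rational coefficients. -/
def IsRPL {n : ℕ} (u : EuclideanSpace ℝ (Fin n) → ℝ) : Prop :=
  ∃ (k : ℕ) (a : Fin (k + 1) → Fin n → ℚ) (b : Fin (k + 1) → ℚ),
    ∀ ξ, u ξ = Finset.univ.sup' Finset.univ_nonempty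
      (fun j => (∑ i, (a j i : ℝ) * ξ i) + (b j : ℝ))

/-- The Donaldson linear functional `L_A(u) = ∫_{∂Δ} u dσ − ∫_Δ A u dμ` for real-valued `u`. -/
def LA {n : ℕ} (Δbar : Set (EuclideanSpace ℝ (Fin n))) (σ : Measure (EuclideanSpace ℝ (Fin n)))
    (A u : EuclideanSpace ℝ (Fin n) → ℝ) : ℝ :=
  ∫ ξ, u ξ ∂σ - ∫ ξ in Δbar, A ξ * u ξ

/-- The Donaldson linear functional for `[0,∞]`-valued convex functions. -/
def LAQ {n : ℕ} (Δbar : Set (EuclideanSpace ℝ (Fin n))) (σ : Measure (EuclideanSpace ℝ (Fin n)))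
    (A : EuclideanSpace ℝ (Fin n) → ℝ) (u : EuclideanSpace ℝ (Fin n) → ℝ≥0∞) : ℝ :=
  (∫⁻ ξ, u ξ ∂σ).toReal - ∫ ξ in Δbar, A ξ * (u ξ).toReal

/-- Convexity for `[0,∞]`-valued functions on a convex set. -/
def ConvexOnENN {n : ℕ} (Δbar : Set (EuclideanSpace ℝ (Fin n)))
    (u : EuclideanSpace ℝ (Fin n) → ℝ≥0∞) : Prop :=
  ∀ ξ ∈ Δbar, ∀ η ∈ Δbar, ∀ t : ℝ, 0 ≤ t → t ≤ 1 →
    u (t • ξ + (1 - t) • η) ≤ ENNReal.ofReal t * u ξ + ENNReal.ofReal (1 - t) * u η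

/-- The Legendre transform `f(x) = sup_{ξ ∈ Δ̄} (⟨x, ξ⟩ − u(ξ))` of a `[0,∞]`-valued
function `u` on `Δ̄` (points where `u = ∞` do not contribute to the supremum). -/
def legendreQ {n : ℕ} (Δbar : Set (EuclideanSpace ℝ (Fin n)))
    (u : EuclideanSpace ℝ (Fin n) → ℝ≥0∞) (x : EuclideanSpace ℝ (Fin n)) : ℝ :=
  sSup {y : ℝ | ∃ ξ ∈ Δbar, u ξ ≠ ⊤ ∧ y = ⟪x, ξ⟫ - (u ξ).toReal}

/-- The Legendre transform of a real-valued function on `Δ̄`. -/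
def legendreR {n : ℕ} (Δbar : Set (EuclideanSpace ℝ (Fin n)))
    (u : EuclideanSpace ℝ (Fin n) → ℝ) (x : EuclideanSpace ℝ (Fin n)) : ℝ :=
  sSup {y : ℝ | ∃ ξ ∈ Δbar, y = ⟪x, ξ⟫ - u ξ}

/-- The subdifferential `Df(p)` of a (convex) function `f : ℝⁿ → ℝ` at `p`. -/
def Dsub {n : ℕ} (f : EuclideanSpace ℝ (Fin n) → ℝ) (p : EuclideanSpace ℝ (Fin n)) :
    Set (EuclideanSpace ℝ (Fin n)) :=
  {q | ∀ x, f p + ⟪q, x - p⟫ ≤ f x}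

/-- `Df(E) = ⋃_{p ∈ E} Df(p)`. -/
def DsubSet {n : ℕ} (f : EuclideanSpace ℝ (Fin n) → ℝ) (s : Set (EuclideanSpace ℝ (Fin n))) :
    Set (EuclideanSpace ℝ (Fin n)) :=
  ⋃ p ∈ s, Dsub f p

/-- The subdifferential `Du(q)` of a `[0,∞]`-valued convex function `u` on `Δ̄` at `q`. -/
def DsubU {n : ℕ} (Δbar : Set (EuclideanSpace ℝ (Fin n)))
    (u : EuclideanSpace ℝ (Fin n) → ℝ≥0∞) (q : EuclideanSpace ℝ (Fin n)) :
    Set (EuclideanSpace ℝ (Fin n)) :=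
  {p | u q ≠ ⊤ ∧ ∀ ξ ∈ Δbar, ENNReal.ofReal ((u q).toReal + ⟪p, ξ - q⟫) ≤ u ξ}

/-- The subdifferential of a real-valued convex function `u` on `Δ̄` at `q`. -/
def DsubR {n : ℕ} (Δbar : Set (EuclideanSpace ℝ (Fin n)))
    (u : EuclideanSpace ℝ (Fin n) → ℝ) (q : EuclideanSpace ℝ (Fin n)) :
    Set (EuclideanSpace ℝ (Fin n)) :=
  {p | ∀ ξ ∈ Δbar, u q + ⟪p, ξ - q⟫ ≤ u ξ}

/-- The sublevel set `S_f(0, h) = {x : f(x) ≤ h}`. -/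
def Ssub {n : ℕ} (f : EuclideanSpace ℝ (Fin n) → ℝ) (h : ℝ) :
    Set (EuclideanSpace ℝ (Fin n)) :=
  {x | f x ≤ h}

/-- `u_h(ξ)`: the supremum of the affine functions defining supporting hyperplanes of the
graph of `u` at points of `W`. -/
def uhQ {n : ℕ} (Δbar : Set (EuclideanSpace ℝ (Fin n)))
    (u : EuclideanSpace ℝ (Fin n) → ℝ≥0∞) (W : Set (EuclideanSpace ℝ (Fin n)))
    (ξ : EuclideanSpace ℝ (Fin n)) : ℝ :=
  sSup {y : ℝ | ∃ q ∈ W, ∃ p ∈ DsubU Δbar u q, y = (u q).toReal + ⟪p, ξ - q⟫}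

/-- `u_h(ξ)` for real-valued `u`. -/
def uhR {n : ℕ} (Δbar : Set (EuclideanSpace ℝ (Fin n)))
    (u : EuclideanSpace ℝ (Fin n) → ℝ) (W : Set (EuclideanSpace ℝ (Fin n)))
    (ξ : EuclideanSpace ℝ (Fin n)) : ℝ :=
  sSup {y : ℝ | ∃ q ∈ W, ∃ p ∈ DsubR Δbar u q, y = u q + ⟪p, ξ - q⟫}

/-- Membership in the class `𝒬`. -/
def memQ {n : ℕ} (Δbar : Set (EuclideanSpace ℝ (Fin n)))
    (σ : Measure (EuclideanSpace ℝ (Fin n))) (o : EuclideanSpace ℝ (Fin n)) (P : ℝ)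
    (u : EuclideanSpace ℝ (Fin n) → ℝ≥0∞) : Prop :=
  LowerSemicontinuousOn u Δbar ∧
  ConvexOnENN Δbar u ∧
  (∀ ξ ∈ interior Δbar, u ξ ≠ ⊤) ∧
  (∃ uk : ℕ → EuclideanSpace ℝ (Fin n) → ℝ,
      (∀ k, IsRPL (uk k)) ∧ (∀ k, ∀ ξ ∈ Δbar, 0 ≤ uk k ξ) ∧ (∀ k, uk k o = 0) ∧
      (∀ k, ∫ ξ, uk k ξ ∂σ ≤ P) ∧
      TendstoLocallyUniformlyOn (fun k ξ => uk k ξ) (fun ξ => (u ξ).toReal)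
        atTop (interior Δbar)) ∧
  (∫⁻ ξ, u ξ ∂σ) = 1 ∧
  u o = 0
/-- Relative K̂-polystability: `L_A(u) ≥ 0` for every bounded lower semicontinuous convex
function `u` on `Δ̄`, with equality iff `u` is affine on `Δ`. -/
def RelKHatPolystable {n : ℕ} (Δbar : Set (EuclideanSpace ℝ (Fin n)))
    (σ : Measure (EuclideanSpace ℝ (Fin n))) (A : EuclideanSpace ℝ (Fin n) → ℝ) : Prop :=
  ∀ u : EuclideanSpace ℝ (Fin n) → ℝ, ConvexOn ℝ Δbar u → LowerSemicontinuousOn u Δbar →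
    (∃ C : ℝ, ∀ ξ ∈ Δbar, |u ξ| ≤ C) →
    0 ≤ LA Δbar σ A u ∧
      (LA Δbar σ A u = 0 ↔
        ∃ (p : EuclideanSpace ℝ (Fin n)) (cst : ℝ),
          ∀ ξ ∈ interior Δbar, u ξ = ⟪p, ξ⟫ + cst)

/-- Uniform relative K-polystability with constant `l > 0`. -/
def UnifRelKPolystable {n : ℕ} (Δbar : Set (EuclideanSpace ℝ (Fin n)))
    (σ : Measure (EuclideanSpace ℝ (Fin n))) (A : EuclideanSpace ℝ (Fin n) → ℝ)
    (p₀ : EuclideanSpace ℝ (Fin n)) (l : ℝ) : Prop :=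
  ∀ u : EuclideanSpace ℝ (Fin n) → ℝ, IsRPL u → u p₀ = 0 → (∀ ξ ∈ Δbar, 0 ≤ u ξ) →
    l * ∫ ξ, u ξ ∂σ ≤ LA Δbar σ A u

/-- The weighted linear functional `L_A(u) = ∫_{∂Δ} u 𝔻 dσ − ∫_Δ A u 𝔻 dμ`. -/
def LAD {n : ℕ} (Δbar : Set (EuclideanSpace ℝ (Fin n)))
    (σ : Measure (EuclideanSpace ℝ (Fin n))) (D A u : EuclideanSpace ℝ (Fin n) → ℝ) : ℝ :=
  ∫ ξ, u ξ * D ξ ∂σ - ∫ ξ in Δbar, A ξ * u ξ * D ξ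

/-- The weighted linear functional for `[0,∞]`-valued `u`. -/
def LAQD {n : ℕ} (Δbar : Set (EuclideanSpace ℝ (Fin n)))
    (σ : Measure (EuclideanSpace ℝ (Fin n))) (D A : EuclideanSpace ℝ (Fin n) → ℝ)
    (u : EuclideanSpace ℝ (Fin n) → ℝ≥0∞) : ℝ :=
  (∫⁻ ξ, u ξ * ENNReal.ofReal (D ξ) ∂σ).toReal - ∫ ξ in Δbar, A ξ * (u ξ).toReal * D ξ

/-- Relative K̂-polystability for `(Δ, 𝔻, A)`. -/
def RelKHatPolystableD {n : ℕ} (Δbar : Set (EuclideanSpace ℝ (Fin n)))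
    (σ : Measure (EuclideanSpace ℝ (Fin n))) (D A : EuclideanSpace ℝ (Fin n) → ℝ) : Prop :=
  ∀ u : EuclideanSpace ℝ (Fin n) → ℝ, ConvexOn ℝ Δbar u → LowerSemicontinuousOn u Δbar →
    (∃ C : ℝ, ∀ ξ ∈ Δbar, |u ξ| ≤ C) →
    0 ≤ LAD Δbar σ D A u ∧
      (LAD Δbar σ D A u = 0 ↔
        ∃ (p : EuclideanSpace ℝ (Fin n)) (cst : ℝ),
          ∀ ξ ∈ interior Δbar, u ξ = ⟪p, ξ⟫ + cst)

/-- Uniform relative K-polystability for `(Δ, 𝔻, A)` with constant `l > 0`. -/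
def UnifRelKPolystableD {n : ℕ} (Δbar : Set (EuclideanSpace ℝ (Fin n)))
    (σ : Measure (EuclideanSpace ℝ (Fin n))) (D A : EuclideanSpace ℝ (Fin n) → ℝ)
    (p₀ : EuclideanSpace ℝ (Fin n)) (l : ℝ) : Prop :=
  ∀ u : EuclideanSpace ℝ (Fin n) → ℝ, IsRPL u → u p₀ = 0 → (∀ ξ ∈ Δbar, 0 ≤ u ξ) →
    l * ∫ ξ, u ξ * D ξ ∂σ ≤ LAD Δbar σ D A u

/-- Membership in the class `𝒬_𝔻`. -/
def memQD {n : ℕ} (Δbar : Set (EuclideanSpace ℝ (Fin n)))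
    (σ : Measure (EuclideanSpace ℝ (Fin n))) (D : EuclideanSpace ℝ (Fin n) → ℝ)
    (o : EuclideanSpace ℝ (Fin n)) (P : ℝ) (u : EuclideanSpace ℝ (Fin n) → ℝ≥0∞) : Prop :=
  LowerSemicontinuousOn u Δbar ∧
  ConvexOnENN Δbar u ∧
  (∀ ξ ∈ interior Δbar, u ξ ≠ ⊤) ∧
  (∃ uk : ℕ → EuclideanSpace ℝ (Fin n) → ℝ,
      (∀ k, IsRPL (uk k)) ∧ (∀ k, ∀ ξ ∈ Δbar, 0 ≤ uk k ξ) ∧ (∀ k, uk k o = 0) ∧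
      (∀ k, ∫ ξ, uk k ξ * D ξ ∂σ ≤ P) ∧
      TendstoLocallyUniformlyOn (fun k ξ => uk k ξ) (fun ξ => (u ξ).toReal)
        atTop (interior Δbar)) ∧
  (∫⁻ ξ, u ξ * ENNReal.ofReal (D ξ) ∂σ) = 1 ∧
  u o = 0

/-- `‖u‖² = ∫_Δ u² dμ − (∫_Δ u dμ)²/μ(Δ)`. -/
def normSqW {n : ℕ} (Δbar : Set (EuclideanSpace ℝ (Fin n)))
    (u : EuclideanSpace ℝ (Fin n) → ℝ) : ℝ :=
  (∫ ξ in interior Δbar, (u ξ) ^ 2) -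
    (∫ ξ in interior Δbar, u ξ) ^ 2 / (volume (interior Δbar)).toReal

/-- `‖u‖`. -/
def normW {n : ℕ} (Δbar : Set (EuclideanSpace ℝ (Fin n)))
    (u : EuclideanSpace ℝ (Fin n) → ℝ) : ℝ :=
  Real.sqrt (normSqW Δbar u)

/-- `a = σ(∂Δ)/μ(Δ)`. -/
def aConst {n : ℕ} (Δbar : Set (EuclideanSpace ℝ (Fin n)))
    (σ : Measure (EuclideanSpace ℝ (Fin n))) : ℝ :=
  (σ (frontier Δbar)).toReal / (volume (interior Δbar)).toReal

/-- `L_a(u) = ∫_{∂Δ} u dσ − a ∫_Δ u dμ`. -/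
def La {n : ℕ} (Δbar : Set (EuclideanSpace ℝ (Fin n)))
    (σ : Measure (EuclideanSpace ℝ (Fin n))) (u : EuclideanSpace ℝ (Fin n) → ℝ) : ℝ :=
  ∫ ξ, u ξ ∂σ - aConst Δbar σ * ∫ ξ in interior Δbar, u ξ

/-- `W(u) = L_a(u)/‖u‖`. -/
def Wfun {n : ℕ} (Δbar : Set (EuclideanSpace ℝ (Fin n)))
    (σ : Measure (EuclideanSpace ℝ (Fin n))) (u : EuclideanSpace ℝ (Fin n) → ℝ) : ℝ :=
  La Δbar σ u / normW Δbar u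

/-- Membership in `C₁ ∩ L²(Δ)`: convex and continuous on `Δ*`, integrable on `∂Δ`
with respect to `σ`, and square integrable on `Δ`. -/
def memC1L2 {n : ℕ} (Δstar Δbar : Set (EuclideanSpace ℝ (Fin n)))
    (σ : Measure (EuclideanSpace ℝ (Fin n))) (u : EuclideanSpace ℝ (Fin n) → ℝ) : Prop :=
  ConvexOn ℝ Δstar u ∧ ContinuousOn u Δstar ∧ Integrable u σ ∧
    MemLp u 2 (volume.restrict (interior Δbar))
/-- Membership in the class `C*^P`. -/
def memCstarP {n : ℕ} (Δbar : Set (EuclideanSpace ℝ (Fin n)))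
    (σ : Measure (EuclideanSpace ℝ (Fin n))) (p₀ : EuclideanSpace ℝ (Fin n)) (P : ℝ)
    (u : EuclideanSpace ℝ (Fin n) → ℝ≥0∞) : Prop :=
  LowerSemicontinuousOn u Δbar ∧
  ConvexOnENN Δbar u ∧
  (∀ ξ ∈ interior Δbar, u ξ ≠ ⊤) ∧
  ∃ vk : ℕ → EuclideanSpace ℝ (Fin n) → ℝ,
    (∀ k, IsRPL (vk k)) ∧ (∀ k, ∀ ξ ∈ Δbar, 0 ≤ vk k ξ) ∧ (∀ k, vk k p₀ = 0) ∧
    (∀ k, ∫ ξ, vk k ξ ∂σ ≤ P) ∧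
    TendstoLocallyUniformlyOn (fun k ξ => vk k ξ) (fun ξ => (u ξ).toReal)
      atTop (interior Δbar)

/-- `u^o = u − u(o) − ⟨p^o, ·⟩` (with `o` the origin). -/
def uoF {n : ℕ} (u : EuclideanSpace ℝ (Fin n) → ℝ) (po : EuclideanSpace ℝ (Fin n)) :
    EuclideanSpace ℝ (Fin n) → ℝ :=
  fun ξ => u ξ - u 0 - ⟪po, ξ⟫

/-- `W_h = Df^o(cl S_{f^o}(0,h))` where `f^o` is the Legendre transform of `u^o`. -/
def WhF {n : ℕ} (Δbar : Set (EuclideanSpace ℝ (Fin n)))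
    (u : EuclideanSpace ℝ (Fin n) → ℝ) (po : EuclideanSpace ℝ (Fin n)) (h : ℝ) :
    Set (EuclideanSpace ℝ (Fin n)) :=
  DsubSet (legendreR Δbar (uoF u po)) (closure (Ssub (legendreR Δbar (uoF u po)) h))

/-- `u_h = u^o_h + u(o) + ⟨p^o, ·⟩`. -/
def uhF {n : ℕ} (Δbar : Set (EuclideanSpace ℝ (Fin n)))
    (u : EuclideanSpace ℝ (Fin n) → ℝ) (po : EuclideanSpace ℝ (Fin n)) (h : ℝ) :
    EuclideanSpace ℝ (Fin n) → ℝ :=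
  fun ξ => uhR Δbar (uoF u po) (WhF Δbar u po h) ξ + u 0 + ⟪po, ξ⟫

lemma convex_setOf_forall_le_inner {ι E : Type*} [NormedAddCommGroup E] [InnerProductSpace ℝ E]
    (ν : ι → E) (lam : ι → ℝ) : Convex ℝ {ξ | ∀ i, lam i ≤ ⟪ξ, ν i⟫} := by
  simp only [ofPred_forall]
  exact convex_iInter fun i =>
    convex_halfSpace_ge ⟨fun x y => inner_add_left x y _, fun c x => real_inner_smul_left x _ c⟩ _

section Segment

variable {E : Type*} [AddCommGroup E] [Module ℝ E] [TopologicalSpace E] [ContinuousSMul ℝ E]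
  {q : E} {S : Set E}

lemma isPreconnected_segment_zero_inter (hS : (Icc (0 : ℝ) 1 ∩ (· • q) ⁻¹' S).OrdConnected) :
    IsPreconnected (segment ℝ 0 q ∩ S) := by
  have hseg : segment ℝ 0 q = (· • q) '' Icc (0 : ℝ) 1 := by simp [segment_eq_image]
  rw [hseg, ← image_inter_preimage]
  exact hS.isPreconnected.image _ (continuous_id.smul continuous_const).continuousOn

lemma isPreconnected_segment_zero_inter_and_compl
    (hS : ∀ s t : ℝ, 0 ≤ s → s ≤ t → t ≤ 1 → t • q ∈ S → s • q ∈ S) :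
    IsPreconnected (segment ℝ 0 q ∩ S) ∧ IsPreconnected (segment ℝ 0 q ∩ Sᶜ) := by
  refine ⟨isPreconnected_segment_zero_inter ⟨fun a ha b hb t ht => ?_⟩,
    isPreconnected_segment_zero_inter ⟨fun a ha b hb t ht => ?_⟩⟩
  · exact ⟨⟨ha.1.1.trans ht.1, ht.2.trans hb.1.2⟩, hS t b (ha.1.1.trans ht.1) ht.2 hb.1.2 hb.2⟩
  · exact ⟨⟨ha.1.1.trans ht.1, ht.2.trans hb.1.2⟩,
      fun htS => ha.2 (hS a t ha.1.1 ht.1 (ht.2.trans hb.1.2) htS)⟩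

end Segment

section Subgradient

variable {n : ℕ} {f : EuclideanSpace ℝ (Fin n) → ℝ}

lemma mem_Dsub_iff_forall_sub_inner_le {p z : EuclideanSpace ℝ (Fin n)} :
    z ∈ Dsub f p ↔ ∀ x, f p - ⟪z, p⟫ ≤ f x - ⟪z, x⟫ :=
  forall_congr' fun x => by rw [inner_sub_right]; constructor <;> intro hx <;> linarith

lemma exists_mem_Dsub_of_tendsto_cocompact (hf : Continuous f) {z : EuclideanSpace ℝ (Fin n)}
    (hz : Tendsto (fun x => f x - ⟪z, x⟫) (cocompact _) atTop) : ∃ p, z ∈ Dsub f p := by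
  obtain ⟨p, hp⟩ := (hf.sub (continuous_const.inner continuous_id)).exists_forall_le hz
  exact ⟨p, mem_Dsub_iff_forall_sub_inner_le.2 hp⟩

lemma le_of_smul_mem_Dsub {p₁ p₂ q : EuclideanSpace ℝ (Fin n)} {t₁ t₂ : ℝ} (ht₁ : 0 ≤ t₁)
    (ht : t₁ < t₂) (h₁ : t₁ • q ∈ Dsub f p₁) (h₂ : t₂ • q ∈ Dsub f p₂) : f p₁ ≤ f p₂ := by
  have e₁ := h₁ p₂
  have e₂ := h₂ p₁
  simp only [real_inner_smul_left, inner_sub_right] at e₁ e₂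
  have hmono : (t₂ - t₁) * (⟪q, p₁⟫ - ⟪q, p₂⟫) ≤ 0 := by linarith
  have hinner : ⟪q, p₁⟫ ≤ ⟪q, p₂⟫ := by nlinarith
  nlinarith

lemma closure_Ssub (hf : Continuous f) (h : ℝ) : closure (Ssub f h) = Ssub f h :=
  (isClosed_le hf continuous_const).closure_eq

lemma smul_mem_DsubSet_Ssub_of_le {q : EuclideanSpace ℝ (Fin n)} {h : ℝ}
    (hray : ∀ t : ℝ, 0 ≤ t → t < 1 → ∃ p, t • q ∈ Dsub f p) {s t : ℝ} (hs : 0 ≤ s) (hst : s ≤ t)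
    (ht : t ≤ 1) (hmem : t • q ∈ DsubSet f (Ssub f h)) : s • q ∈ DsubSet f (Ssub f h) := by
  rcases hst.eq_or_lt with rfl | hlt
  · exact hmem
  obtain ⟨p₂, hp₂h, hp₂⟩ := mem_iUnion₂.1 hmem
  obtain ⟨p₁, hp₁⟩ := hray s hs (hlt.trans_le ht)
  exact mem_iUnion₂.2 ⟨p₁, (le_of_smul_mem_Dsub hs hlt hp₁ hp₂).trans hp₂h, hp₁⟩

end Subgradient

section Legendre

variable {n : ℕ} {K : Set (EuclideanSpace ℝ (Fin n))} {u : EuclideanSpace ℝ (Fin n) → ℝ≥0∞}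

lemma bddAbove_legendreQ_set (hK : Bornology.IsBounded K) (x : EuclideanSpace ℝ (Fin n)) :
    BddAbove {y : ℝ | ∃ ξ ∈ K, u ξ ≠ ⊤ ∧ y = ⟪x, ξ⟫ - (u ξ).toReal} := by
  obtain ⟨R, hR⟩ := hK.exists_norm_le
  refine ⟨‖x‖ * R, ?_⟩
  rintro _ ⟨ξ, hξ, -, rfl⟩
  have := (real_inner_le_norm x ξ).trans (mul_le_mul_of_nonneg_left (hR ξ hξ) (norm_nonneg x))
  linarith [(u ξ).toReal_nonneg]

lemma inner_sub_le_legendreQ (hK : Bornology.IsBounded K) {x ξ : EuclideanSpace ℝ (Fin n)}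
    (hξ : ξ ∈ K) (hu : u ξ ≠ ⊤) : ⟪x, ξ⟫ - (u ξ).toReal ≤ legendreQ K u x :=
  le_csSup (bddAbove_legendreQ_set hK x) ⟨ξ, hξ, hu, rfl⟩

lemma legendreQ_le (hne : ∃ ξ ∈ K, u ξ ≠ ⊤) {x : EuclideanSpace ℝ (Fin n)} {B : ℝ}
    (hB : ∀ ξ ∈ K, u ξ ≠ ⊤ → ⟪x, ξ⟫ - (u ξ).toReal ≤ B) : legendreQ K u x ≤ B := by
  obtain ⟨ξ₀, hξ₀, hu₀⟩ := hne
  refine csSup_le ⟨_, ξ₀, hξ₀, hu₀, rfl⟩ ?_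
  rintro _ ⟨ξ, hξ, hu, rfl⟩
  exact hB ξ hξ hu

lemma continuous_legendreQ (hK : Bornology.IsBounded K) (hne : ∃ ξ ∈ K, u ξ ≠ ⊤) :
    Continuous (legendreQ K u) := by
  obtain ⟨R, hR⟩ := hK.exists_norm_le
  refine (LipschitzWith.of_le_add_mul' R fun x y => legendreQ_le hne fun ξ hξ hu => ?_).continuous
  have hy := inner_sub_le_legendreQ (x := y) hK hξ hu
  have hxy : ⟪x - y, ξ⟫ ≤ R * dist x y := by
    rw [dist_eq_norm, mul_comm]
    exact (real_inner_le_norm _ _).trans (mul_le_mul_of_nonneg_left (hR ξ hξ) (norm_nonneg _))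
  rw [inner_sub_left] at hxy
  linarith

lemma le_legendreQ_sub_inner (hK : Bornology.IsBounded K) {z : EuclideanSpace ℝ (Fin n)}
    {ε C : ℝ} (hε : 0 ≤ ε) (hball : closedBall z ε ⊆ K)
    (hC : ∀ ξ ∈ closedBall z ε, u ξ ≠ ⊤ ∧ (u ξ).toReal ≤ C) (x : EuclideanSpace ℝ (Fin n)) :
    ε * ‖x‖ - C ≤ legendreQ K u x - ⟪z, x⟫ := by
  -- the point of the ball maximising `⟪x, ·⟫`; for `x = 0` it is `z`, since `ε / 0 = 0`
  have hξ : z + (ε / ‖x‖) • x ∈ closedBall z ε := by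
    rcases eq_or_ne ‖x‖ 0 with hx | hx <;> simp [hx, norm_smul, abs_of_nonneg hε, hε]
  have hinner : ⟪x, z + (ε / ‖x‖) • x⟫ = ⟪z, x⟫ + ε * ‖x‖ := by
    rw [inner_add_right, real_inner_smul_right, real_inner_self_eq_norm_sq, real_inner_comm]
    rcases eq_or_ne ‖x‖ 0 with hx | hx
    · simp [hx]
    · field_simp
  have := inner_sub_le_legendreQ (x := x) hK (hball hξ) (hC _ hξ).1
  linarith [(hC _ hξ).2]

lemma tendsto_legendreQ_sub_inner_cocompact (hK : Bornology.IsBounded K)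
    {z : EuclideanSpace ℝ (Fin n)} (hz : z ∈ interior K)
    (hcont : ContinuousOn (fun ξ => (u ξ).toReal) (interior K))
    (hfin : ∀ ξ ∈ interior K, u ξ ≠ ⊤) :
    Tendsto (fun x => legendreQ K u x - ⟪z, x⟫) (cocompact _) atTop := by
  obtain ⟨ε, hε, hball⟩ := nhds_basis_closedBall.mem_iff.1 (isOpen_interior.mem_nhds hz)
  obtain ⟨C, hC⟩ := (isCompact_closedBall z ε).exists_bound_of_continuousOn (hcont.mono hball)
  refine tendsto_atTop_mono (le_legendreQ_sub_inner hK hε.le (hball.trans interior_subset)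
    fun ξ hξ => ⟨hfin ξ (hball hξ), (le_abs_self _).trans (hC ξ hξ)⟩) ?_
  simpa only [sub_eq_add_neg] using
    tendsto_atTop_add_const_right _ (-C) (tendsto_norm_cocompact_atTop.const_mul_atTop hε)

lemma exists_mem_Dsub_legendreQ (hK : Bornology.IsBounded K) {z : EuclideanSpace ℝ (Fin n)}
    (hz : z ∈ interior K) (hcont : ContinuousOn (fun ξ => (u ξ).toReal) (interior K))
    (hfin : ∀ ξ ∈ interior K, u ξ ≠ ⊤) : ∃ p, z ∈ Dsub (legendreQ K u) p :=
  exists_mem_Dsub_of_tendsto_cocompact (continuous_legendreQ hK ⟨z, interior_subset hz, hfin z hz⟩)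
    (tendsto_legendreQ_sub_inner_cocompact hK hz hcont hfin)

end Legendre

lemma IsRPL.continuous {n : ℕ} {u : EuclideanSpace ℝ (Fin n) → ℝ} (hu : IsRPL u) :
    Continuous u := by
  obtain ⟨k, a, b, hab⟩ := hu
  rw [funext hab]
  exact Continuous.finset_sup'_apply _ fun j _ =>
    (continuous_finsetSum _ fun i _ => continuous_const.mul (EuclideanSpace.proj i).continuous).add
      continuous_const

lemma memQ.continuousOn_toReal {n : ℕ} {Δbar : Set (EuclideanSpace ℝ (Fin n))}
    {σ : Measure (EuclideanSpace ℝ (Fin n))} {o : EuclideanSpace ℝ (Fin n)} {P : ℝ}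
    {u : EuclideanSpace ℝ (Fin n) → ℝ≥0∞} (hu : memQ Δbar σ o P u) :
    ContinuousOn (fun ξ => (u ξ).toReal) (interior Δbar) := by
  obtain ⟨-, -, -, ⟨uk, hRPL, -, -, -, hlim⟩, -, -⟩ := hu
  exact hlim.continuousOn (Eventually.of_forall fun k => (hRPL k).continuous.continuousOn).frequently

theorem segment_inter_Wh_connected_general {n d : ℕ}
    (ν : Fin d → EuclideanSpace ℝ (Fin n)) (lam : Fin d → ℝ)
    (Δbar : Set (EuclideanSpace ℝ (Fin n))) (σ : Measure (EuclideanSpace ℝ (Fin n)))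
    (P : ℝ) (u : EuclideanSpace ℝ (Fin n) → ℝ≥0∞) (h : ℝ) (q : EuclideanSpace ℝ (Fin n))
    (hΔ : Δbar = {ξ | ∀ i, lam i ≤ ⟪ξ, ν i⟫})
    (hcomp : IsCompact Δbar)
    (ho : (0 : EuclideanSpace ℝ (Fin n)) ∈ interior Δbar)
    (hu : memQ Δbar σ 0 P u)
    (hq : q ∈ frontier Δbar) :
    IsPreconnected (segment ℝ (0 : EuclideanSpace ℝ (Fin n)) q ∩
        DsubSet (legendreQ Δbar u) (closure (Ssub (legendreQ Δbar u) h))) ∧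
      IsPreconnected (segment ℝ (0 : EuclideanSpace ℝ (Fin n)) q ∩
        (Δbar \ DsubSet (legendreQ Δbar u) (closure (Ssub (legendreQ Δbar u) h)))) := by
  have hcont := hu.continuousOn_toReal
  obtain ⟨-, -, hfin, -⟩ := hu
  have hconv : Convex ℝ Δbar := hΔ ▸ convex_setOf_forall_le_inner ν lam
  have hqΔ : q ∈ closure Δbar := frontier_subset_closure hq
  have hseg : segment ℝ 0 q ⊆ Δbar :=
    hconv.segment_subset (interior_subset ho) (hcomp.isClosed.closure_subset hqΔ)
  have hray : ∀ t : ℝ, 0 ≤ t → t < 1 → ∃ p, t • q ∈ Dsub (legendreQ Δbar u) p := by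
    intro t ht ht₁
    have hmem := hconv.combo_interior_closure_mem_interior ho hqΔ (sub_pos.2 ht₁) ht (by ring)
    rw [smul_zero, zero_add] at hmem
    exact exists_mem_Dsub_legendreQ hcomp.isBounded hmem hcont hfin
  rw [closure_Ssub (continuous_legendreQ hcomp.isBounded ⟨0, interior_subset ho, hfin 0 ho⟩),
    ← inter_sdiff_assoc, inter_eq_left.2 hseg, sdiff_eq]
  exact isPreconnected_segment_zero_inter_and_compl fun s t hs hst ht =>
    smul_mem_DsubSet_Ssub_of_le hray hs hst ht

/-- For `u ∈ 𝒬` with Legendre transform `f`, `h > 0` and `q ∈ ∂Δ`, the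
intersection of the segment `[o, q]` with `W_h` is connected, and its intersection with
`Δ̄ \ W_h` is connected. -/
theorem segment_inter_Wh_connected {n d : ℕ} (hn : 1 ≤ n)
    (ν : Fin d → EuclideanSpace ℝ (Fin n)) (lam : Fin d → ℝ) (c : Fin d → ℝ)
    (Δbar : Set (EuclideanSpace ℝ (Fin n))) (σ : Measure (EuclideanSpace ℝ (Fin n)))
    (P : ℝ) (u : EuclideanSpace ℝ (Fin n) → ℝ≥0∞) (h : ℝ) (q : EuclideanSpace ℝ (Fin n))
    (hΔ : Δbar = {ξ | ∀ i, lam i ≤ ⟪ξ, ν i⟫})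
    (hcomp : IsCompact Δbar) (hne : (interior Δbar).Nonempty)
    (hc : ∀ i, 0 < c i)
    (hσ : σ = ∑ i, (ENNReal.ofReal (c i)) •
        (Measure.hausdorffMeasure ((n : ℝ) - 1)).restrict
          (Δbar ∩ {ξ | ⟪ξ, ν i⟫ = lam i}))
    (ho : (0 : EuclideanSpace ℝ (Fin n)) ∈ interior Δbar)
    (hP : 0 < P)
    (hu : memQ Δbar σ 0 P u)
    (hh : 0 < h)
    (hq : q ∈ frontier Δbar) :
    IsPreconnected (segment ℝ (0 : EuclideanSpace ℝ (Fin n)) q ∩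
        DsubSet (legendreQ Δbar u) (closure (Ssub (legendreQ Δbar u) h))) ∧
      IsPreconnected (segment ℝ (0 : EuclideanSpace ℝ (Fin n)) q ∩
        (Δbar \ DsubSet (legendreQ Δbar u) (closure (Ssub (legendreQ Δbar u) h)))) :=
  segment_inter_Wh_connected_general ν lam Δbar σ P u h q hΔ hcomp ho hu hq
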